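/- Let λ ∈ k, λ ≠ 0, and let s₁ : P_e → B(1,λ) be the Λ_e-homomorphism with s₁(b_{e,1}) = c_e, s₁(b_{e,2}) = c_{e+1}, s₁(b_{e,3}) = λc_{e+1}, s₁(b_{i,1}) = c_i for 1 ≤ i ≤ e−1, and s₁ = 0 on b_{e,4} and all b_{i,2}. Then s₁ is surjective, and its kernel (with the structure maps restricted from P_e) is isomorphic as a representation of Q_e (equivalently as a Λ_e-module) to the band module B(1,−λ^{−1}); explicitly, the vectors d_i = b_{i,2} for 1 ≤ i ≤ e−1, d_e = b_{e,2} − λ^{−1}b_{e,3}, and d_{e+1} = b_{e,4} form a basis of ker s₁ on which the structure maps act as they do on the standard basis of B(1,−λ^{−1}). -/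

import Mathlib

/-! Common framework: representations of the quiver Q_e / modules over the
generalized Brauer star algebra Λ_e, encoded as a module `V` together with
endomorphisms `v i` (images of the vertex idempotents), `a i` (images of the
arrows; `a i` is the arrow leaving vertex `i`, with `a ⟨e-1⟩` the arrow
`α_e : e → 1`) and `d` (image of the loop `δ`). -/

namespace GBTA

structure PreRep (R : Type) [CommRing R] (e : ℕ) : Type 1 where
  V : Type
  [instAdd : AddCommGroup V]
  [instMod : Module R V]
  v : Fin e → Module.End R V
  a : Fin e → Module.End R V
  d : Module.End R V

attribute [instance] PreRep.instAdd PreRep.instMod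

variable {R : Type} [CommRing R] {e : ℕ}

/-- The (0-based) index of the vertex `e`. -/
def ve (e : ℕ) [NeZero e] : Fin e :=
  ⟨e - 1, by have := Nat.pos_of_ne_zero (NeZero.ne e); omega⟩

/-- The (0-based) index of the vertex `e - 1`. -/
def vem (e : ℕ) [NeZero e] : Fin e :=
  ⟨e - 2, by have := Nat.pos_of_ne_zero (NeZero.ne e); omega⟩

/-- The cycle `C_i`: the composite of the `e` cyclically consecutive arrows
starting with the arrow leaving vertex `i` (composites written right to left). -/
def cyc [NeZero e] (ρ : PreRep R e) (i : Fin e) : Module.End R ρ.V :=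
  (((List.range e).reverse).map fun l => ρ.a (i + (Fin.ofNat e l))).prod

/-- The defining relations of the generalized Brauer star algebra `Λ_e`. -/
def Satisfies [NeZero e] (ρ : PreRep R e) : Prop :=
  (∀ i j : Fin e, i ≠ j → ρ.v i * ρ.v j = 0) ∧
  (∀ i : Fin e, ρ.v i * ρ.v i = ρ.v i) ∧
  ((∑ i : Fin e, ρ.v i) = 1) ∧
  (∀ i : Fin e, ρ.a i = ρ.v (i + 1) * ρ.a i * ρ.v i) ∧
  (ρ.d = ρ.v (ve e) * ρ.d * ρ.v (ve e)) ∧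
  (ρ.d * ρ.a (vem e) = 0) ∧
  (ρ.a (ve e) * ρ.d = 0) ∧
  (ρ.d * ρ.d = cyc ρ (ve e) * cyc ρ (ve e)) ∧
  (∀ i : Fin e, i ≠ ve e → ρ.a i * (cyc ρ i * cyc ρ i) = 0)

/-- The space of `Λ_e`-module homomorphisms `ρ → σ`: linear maps commuting with
all the structure maps. -/
def homSet (ρ σ : PreRep R e) : Submodule R (ρ.V →ₗ[R] σ.V) where
  carrier := {f | (∀ i, f ∘ₗ ρ.v i = σ.v i ∘ₗ f) ∧ (∀ i, f ∘ₗ ρ.a i = σ.a i ∘ₗ f) ∧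
    f ∘ₗ ρ.d = σ.d ∘ₗ f}
  add_mem' := by
    rintro f g ⟨hfv, hfa, hfd⟩ ⟨hgv, hga, hgd⟩
    exact ⟨fun i => by simp only [LinearMap.add_comp, LinearMap.comp_add, hfv i, hgv i],
      fun i => by simp only [LinearMap.add_comp, LinearMap.comp_add, hfa i, hga i],
      by simp only [LinearMap.add_comp, LinearMap.comp_add, hfd, hgd]⟩
  zero_mem' := ⟨fun i => by simp, fun i => by simp, by simp⟩
  smul_mem' := by
    rintro c f ⟨hfv, hfa, hfd⟩
    exact ⟨fun i => by simp only [LinearMap.smul_comp, LinearMap.comp_smul, hfv i],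
      fun i => by simp only [LinearMap.smul_comp, LinearMap.comp_smul, hfa i],
      by simp only [LinearMap.smul_comp, LinearMap.comp_smul, hfd]⟩

/-- Projectivity of a `Λ_e`-module, via the lifting property in the category of
`Λ_e`-modules. -/
def IsProjective [NeZero e] (P : PreRep R e) : Prop :=
  Satisfies P ∧
  ∀ (A B : PreRep R e), Satisfies A → Satisfies B →
    ∀ p ∈ homSet A B, Function.Surjective p →
      ∀ g ∈ homSet P B, ∃ h ∈ homSet P A, p ∘ₗ h = g

/-- An endomorphism `f` of `ρ` factors through a projective `Λ_e`-module. -/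
def FactorsThroughProjective [NeZero e] (ρ : PreRep R e) (f : ρ.V →ₗ[R] ρ.V) : Prop :=
  ∃ P : PreRep R e, IsProjective P ∧ ∃ g ∈ homSet ρ P, ∃ h ∈ homSet P ρ, f = h ∘ₗ g

/-- "The stable endomorphism ring of `ρ` is isomorphic to the scalars": the identity
does not factor through a projective, and modulo endomorphisms factoring through
projectives every endomorphism is a scalar multiple of the identity. -/
def StableEndIsoScalars [NeZero e] (ρ : PreRep R e) : Prop :=
  (¬ FactorsThroughProjective ρ LinearMap.id) ∧
  ∀ f ∈ homSet ρ ρ, ∃ c : R, FactorsThroughProjective ρ (f - c • LinearMap.id)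

/-- The linear map on `Fin m → W` sending the `src` coordinate to the `dst`
coordinate through `g`, and killing all other coordinates. -/
def mk1 {m : ℕ} {W : Type} [AddCommGroup W] [Module R W] (src dst : Fin m)
    (g : W →ₗ[R] W) : (Fin m → W) →ₗ[R] (Fin m → W) where
  toFun x := fun r => if r = dst then g (x src) else 0
  map_add' x y := by funext r; by_cases h : r = dst <;> simp [h]
  map_smul' c x := by funext r; by_cases h : r = dst <;> simp [h]

/-- Projection onto the coordinates satisfying `S`. -/
def prj {m : ℕ} {W : Type} [AddCommGroup W] [Module R W] (S : Fin m → Prop)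
    [DecidablePred S] : (Fin m → W) →ₗ[R] (Fin m → W) where
  toFun x := fun r => if S r then x r else 0
  map_add' x y := by funext r; by_cases h : S r <;> simp [h]
  map_smul' c x := by funext r; by_cases h : S r <;> simp [h]

/-- Last row index (`e`, 0-based) among `e+1` rows. -/
def lastRow (e : ℕ) : Fin (e + 1) := ⟨e, Nat.lt_succ_self e⟩

/-- Second-to-last row index (`e-1`, 0-based) among `e+1` rows. -/
def sndRow (e : ℕ) : Fin (e + 1) := ⟨e - 1, by omega⟩

/-- The vertex carrying each of the `e+1` rows: row `r < e-1` sits at vertex `r`,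
rows `e-1` and `e` sit at the vertex `e` (0-based index `e-1`). -/
def vrt (e : ℕ) [NeZero e] : Fin (e + 1) → Fin e := fun r =>
  if h : r.val < e - 1 then ⟨r.val, by omega⟩ else ve e


/-- The `n × n` Jordan block with eigenvalue `lam`. -/
def jordan (R : Type) [CommRing R] (n : ℕ) (lam : R) : Matrix (Fin n) (Fin n) R :=
  Matrix.of fun i j => if i = j then lam else if (j : ℕ) = (i : ℕ) + 1 then 1 else 0

/-- The band module `B(n, lam)`. Rows `0, …, e-2` are the components `k^n` at the
vertices `1, …, e-1`; rows `e-1` and `e` are the two copies of `k^n` at vertex `e`. -/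
@[reducible] def band (R : Type) [CommRing R] (e : ℕ) [NeZero e] (n : ℕ) (lam : R) : PreRep R e where
  V := Fin (e + 1) → Fin n → R
  v i := prj fun r => vrt e r = i
  a j :=
    if j.val = e - 1 then mk1 (sndRow e) ⟨0, by omega⟩ LinearMap.id
    else if j.val = e - 2 then mk1 ⟨e - 2, by omega⟩ (lastRow e) LinearMap.id
    else mk1 ⟨j.val, Nat.lt_succ_of_lt j.isLt⟩ ⟨j.val + 1, Nat.succ_lt_succ j.isLt⟩ LinearMap.id
  d := mk1 (sndRow e) (lastRow e) (Matrix.mulVecLin (jordan R n lam))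

/-- The band module `B(1, s)` (with `δ` acting through the scalar `s`); the standard
basis vector `c_i` (`1 ≤ i ≤ e-1`) is the `i-1`-st coordinate, `c_e` the `e-1`-st and
`c_{e+1}` the `e`-th. -/
@[reducible] def band1 (R : Type) [CommRing R] (e : ℕ) [NeZero e] (s : R) : PreRep R e where
  V := Fin (e + 1) → R
  v i := prj fun r => vrt e r = i
  a j :=
    if j.val = e - 1 then mk1 (sndRow e) ⟨0, by omega⟩ LinearMap.id
    else if j.val = e - 2 then mk1 ⟨e - 2, by omega⟩ (lastRow e) LinearMap.id
    else mk1 ⟨j.val, Nat.lt_succ_of_lt j.isLt⟩ ⟨j.val + 1, Nat.succ_lt_succ j.isLt⟩ LinearMap.id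
  d := mk1 (sndRow e) (lastRow e) (s • LinearMap.id)

/-- The projective module `P_e`, with basis `b_{i,1}, b_{i,2}` (row `i-1`) for
`1 ≤ i ≤ e-1` and `b_{e,1}, b_{e,2}` (row `e-1`), `b_{e,3}, b_{e,4}` (row `e`). -/
@[reducible] def Pe (R : Type) [CommRing R] (e : ℕ) [NeZero e] : PreRep R e where
  V := Fin (e + 1) → Fin 2 → R
  v i := prj fun r => vrt e r = i
  a j :=
    if j.val = e - 1 then mk1 (sndRow e) ⟨0, by omega⟩ LinearMap.id
    else if j.val = e - 2 then
      mk1 ⟨e - 2, by omega⟩ (sndRow e) (Matrix.mulVecLin !![0, 0; 1, 0])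
        + mk1 ⟨e - 2, by omega⟩ (lastRow e) (Matrix.mulVecLin !![0, 0; 0, 1])
    else mk1 ⟨j.val, Nat.lt_succ_of_lt j.isLt⟩ ⟨j.val + 1, Nat.succ_lt_succ j.isLt⟩ LinearMap.id
  d := mk1 (sndRow e) (lastRow e) (Matrix.mulVecLin !![1, 0; 0, 0])
    + mk1 (lastRow e) (lastRow e) (Matrix.mulVecLin !![0, 0; 1, 0])

/-- `Mdef R e τ`: the representation with basis `m_1, …, m_{e+1}` (rows `0, …, e`),
`α_j(m_j) = m_{j+1}` for `j ≤ e-2`, `α_{e-1}(m_{e-1}) = τ · m_{e+1}`,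
`α_e(m_e) = m_1`, `δ(m_e) = m_{e+1}`.  For `τ = 0` this is the string module `W`. -/
@[reducible] def Mdef (R : Type) [CommRing R] (e : ℕ) [NeZero e] (t : R) : PreRep R e where
  V := Fin (e + 1) → R
  v i := prj fun r => vrt e r = i
  a j :=
    if j.val = e - 1 then mk1 (sndRow e) ⟨0, by omega⟩ LinearMap.id
    else if j.val = e - 2 then mk1 ⟨e - 2, by omega⟩ (lastRow e) (t • LinearMap.id)
    else mk1 ⟨j.val, Nat.lt_succ_of_lt j.isLt⟩ ⟨j.val + 1, Nat.succ_lt_succ j.isLt⟩ LinearMap.id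
  d := mk1 (sndRow e) (lastRow e) LinearMap.id

/-- The uniserial module `U_{[i,j]}` (with `1 ≤ i ≤ j ≤ e`, 1-based). -/
@[reducible] def U (R : Type) [CommRing R] (e i j : ℕ) : PreRep R e where
  V := Fin (j + 1 - i) → R
  v t := prj fun r => i - 1 + r.val = t.val
  a t :=
    if h : i ≤ t.val + 1 ∧ t.val + 1 ≤ j - 1 then
      mk1 ⟨t.val + 1 - i, by omega⟩ ⟨t.val + 2 - i, by omega⟩ LinearMap.id
    else 0
  d := 0

/-- The uniserial projective module `P_i` (`i0` is the 0-based index of the vertex),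
with basis `p_0, …, p_{2e}` following the cycle of arrows twice around. -/
@[reducible] def Puni (R : Type) [CommRing R] (e : ℕ) [NeZero e] (i0 : ℕ) : PreRep R e where
  V := Fin (2 * e + 1) → R
  v t := prj fun r => (i0 + r.val) % e = t.val
  a t := ∑ l : Fin (2 * e),
    if (i0 + l.val) % e = t.val then mk1 l.castSucc l.succ LinearMap.id else 0
  d := 0

/-- The simple module `S_e` at the vertex `e`. -/
@[reducible] def Se (R : Type) [CommRing R] (e : ℕ) [NeZero e] : PreRep R e where
  V := R
  v i := if i = ve e then 1 else 0
  a _ := 0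
  d := 0

/-- Block upper triangular endomorphism `(x, y) ↦ (f x + θ y, f y)` of `V × V`. -/
def blk {V : Type} [AddCommGroup V] [Module R V] (f th : Module.End R V) :
    Module.End R (V × V) where
  toFun p := (f p.1 + th p.2, f p.2)
  map_add' p q := by
    simp only [Prod.fst_add, Prod.snd_add, map_add, Prod.mk_add_mk, Prod.mk.injEq, and_true]
    abel
  map_smul' c p := by
    simp only [Prod.smul_fst, Prod.smul_snd, map_smul, Prod.smul_mk, Prod.mk.injEq,
      smul_add, RingHom.id_apply, and_self]

section Ext
variable [NeZero e]

/-- The data of a self-extension of `ρ`: for each generator of `Λ_e`, the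
off-diagonal block of its action on `ρ.V × ρ.V`. -/
abbrev Cochain (ρ : PreRep R e) : Type :=
  (Fin e → Module.End R ρ.V) × (Fin e → Module.End R ρ.V) × Module.End R ρ.V

/-- The self-extension of `ρ` determined by the cochain `θ`. -/
@[reducible] def extRep (ρ : PreRep R e) (th : Cochain ρ) : PreRep R e where
  V := ρ.V × ρ.V
  v i := blk (ρ.v i) (th.1 i)
  a i := blk (ρ.a i) (th.2.1 i)
  d := blk ρ.d th.2.2

/-- `θ` is a cocycle precisely when the corresponding extension is a `Λ_e`-module. -/
def IsCocycle (ρ : PreRep R e) (th : Cochain ρ) : Prop := Satisfies (extRep ρ th)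

/-- The coboundary of `φ`; extensions differing by a coboundary are equivalent. -/
def bnd (ρ : PreRep R e) (phi : Module.End R ρ.V) : Cochain ρ :=
  (fun i => ρ.v i * phi - phi * ρ.v i, fun i => ρ.a i * phi - phi * ρ.a i,
    ρ.d * phi - phi * ρ.d)

/-- `Ext¹_{Λ_e}(ρ, ρ)`, i.e. the space of self-extensions of `ρ` modulo equivalence
(equivalently cocycles modulo coboundaries), is one-dimensional. -/
def ExtSelfOneDimensional (ρ : PreRep R e) : Prop :=
  ∃ th0 : Cochain ρ, IsCocycle ρ th0 ∧ (∀ phi, th0 ≠ bnd ρ phi) ∧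
    ∀ th : Cochain ρ, IsCocycle ρ th → ∃ (c : R) (phi : Module.End R ρ.V),
      th = c • th0 + bnd ρ phi

end Ext


/-- The endomorphism algebra of a representation. -/
def endAlg (ρ : PreRep R e) : Subalgebra R (Module.End R ρ.V) where
  carrier := {f | (∀ i, f * ρ.v i = ρ.v i * f) ∧ (∀ i, f * ρ.a i = ρ.a i * f) ∧
    f * ρ.d = ρ.d * f}
  mul_mem' := by
    rintro f g ⟨hfv, hfa, hfd⟩ ⟨hgv, hga, hgd⟩
    refine ⟨fun i => ?_, fun i => ?_, ?_⟩
    · rw [mul_assoc, hgv i, ← mul_assoc, hfv i, mul_assoc]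
    · rw [mul_assoc, hga i, ← mul_assoc, hfa i, mul_assoc]
    · rw [mul_assoc, hgd, ← mul_assoc, hfd, mul_assoc]
  one_mem' := ⟨fun i => by rw [one_mul, mul_one], fun i => by rw [one_mul, mul_one],
    by rw [one_mul, mul_one]⟩
  add_mem' := by
    rintro f g ⟨hfv, hfa, hfd⟩ ⟨hgv, hga, hgd⟩
    exact ⟨fun i => by rw [add_mul, mul_add, hfv i, hgv i],
      fun i => by rw [add_mul, mul_add, hfa i, hga i],
      by rw [add_mul, mul_add, hfd, hgd]⟩
  zero_mem' := ⟨fun i => by rw [zero_mul, mul_zero], fun i => by rw [zero_mul, mul_zero],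
    by rw [zero_mul, mul_zero]⟩
  algebraMap_mem' c :=
    ⟨fun i => Algebra.commutes c (ρ.v i), fun i => Algebra.commutes c (ρ.a i),
      Algebra.commutes c ρ.d⟩

/-- The endomorphism `τ` of `B(1,λ)` (and of `W`): `c_e ↦ c_{e+1}`, all other
standard basis vectors to `0`. -/
def tau (R : Type) [CommRing R] (e : ℕ) : (Fin (e + 1) → R) →ₗ[R] (Fin (e + 1) → R) :=
  mk1 (sndRow e) (lastRow e) LinearMap.id

/-- The map `r₁ : B(1,λ) → P_e` (with parameter `μ` the coefficient on `b_{e,3}`):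
`c_i ↦ b_{i,2}` for `1 ≤ i ≤ e-1`, `c_e ↦ b_{e,2} + μ b_{e,3}`, `c_{e+1} ↦ b_{e,4}`. -/
def r1 (R : Type) [CommRing R] (e : ℕ) (mu : R) :
    (Fin (e + 1) → R) →ₗ[R] (Fin (e + 1) → Fin 2 → R) where
  toFun x := fun r c => if c = 1 then x r else if r = lastRow e then mu * x (sndRow e) else 0
  map_add' x y := by
    funext r c
    by_cases h : c = 1
    · simp [h]
    · by_cases h2 : r = lastRow e <;> simp [h, h2, mul_add]
  map_smul' t x := by
    funext r c
    by_cases h : c = 1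
    · simp [h]
    · by_cases h2 : r = lastRow e <;> simp [h, h2] <;> ring

/-- The map `r₂ : B(1,λ) → P_e`: `c_e ↦ b_{e,4}`, all other basis vectors to `0`. -/
def r2 (R : Type) [CommRing R] (e : ℕ) :
    (Fin (e + 1) → R) →ₗ[R] (Fin (e + 1) → Fin 2 → R) where
  toFun x := fun r c => if r = lastRow e ∧ c = 1 then x (sndRow e) else 0
  map_add' x y := by
    funext r c
    by_cases h : r = lastRow e ∧ c = 1 <;> simp [h]
  map_smul' t x := by
    funext r c
    by_cases h : r = lastRow e ∧ c = 1 <;> simp [h]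

/-- The map `s₁ : P_e → B(1,λ)`: `b_{e,1} ↦ c_e`, `b_{e,2} ↦ c_{e+1}`,
`b_{e,3} ↦ λ c_{e+1}`, `b_{i,1} ↦ c_i`; zero on `b_{e,4}` and the `b_{i,2}`. -/
def s1 (R : Type) [CommRing R] (e : ℕ) (lam : R) :
    (Fin (e + 1) → Fin 2 → R) →ₗ[R] (Fin (e + 1) → R) where
  toFun y := fun r =>
    if r = lastRow e then y (sndRow e) 1 + lam * y (lastRow e) 0 else y r 0
  map_add' x y := by
    funext r
    by_cases h : r = lastRow e <;> simp [h, mul_add] <;> ring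
  map_smul' t x := by
    funext r
    by_cases h : r = lastRow e <;> simp [h] <;> ring

/-- The map `s₂ : P_e → B(1,λ)`: `b_{e,1} ↦ c_{e+1}`, all other basis vectors to `0`. -/
def s2 (R : Type) [CommRing R] (e : ℕ) :
    (Fin (e + 1) → Fin 2 → R) →ₗ[R] (Fin (e + 1) → R) where
  toFun y := fun r => if r = lastRow e then y (sndRow e) 0 else 0
  map_add' x y := by funext r; by_cases h : r = lastRow e <;> simp [h]
  map_smul' t x := by funext r; by_cases h : r = lastRow e <;> simp [h]

/-- The map `g : W → P_e`, `w_e ↦ b_{e,3}`, `w_{e+1} ↦ b_{e,4}`, `w_j ↦ 0`. -/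
def gW (R : Type) [CommRing R] (e : ℕ) :
    (Fin (e + 1) → R) →ₗ[R] (Fin (e + 1) → Fin 2 → R) where
  toFun x := fun r c =>
    if r = lastRow e then (if c = 0 then x (sndRow e) else x (lastRow e)) else 0
  map_add' x y := by
    funext r c
    by_cases h : r = lastRow e <;> by_cases h2 : c = 0 <;> simp [h, h2]
  map_smul' t x := by
    funext r c
    by_cases h : r = lastRow e <;> by_cases h2 : c = 0 <;> simp [h, h2]

/-- The map `h : P_e → W`, `b_{e,1} ↦ w_e`, `b_{j,1} ↦ w_j`, `b_{e,3} ↦ w_{e+1}`,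
zero on `b_{e,2}`, `b_{e,4}` and the `b_{j,2}`. -/
def hW (R : Type) [CommRing R] (e : ℕ) :
    (Fin (e + 1) → Fin 2 → R) →ₗ[R] (Fin (e + 1) → R) where
  toFun y := fun r => y r 0
  map_add' x y := rfl
  map_smul' t x := rfl


/-! A vector `y` of `P_e` lies in `ker s₁` iff its coordinates along `b_{1,1}, …, b_{e,1}`
vanish and `y_{e,2} + λ y_{e,3} = 0`.  Such a vector is determined by its coordinates along
`b_{i,2}` (`i < e`), `b_{e,2}` and `b_{e,4}`, since `y_{e,3} = -λ⁻¹ y_{e,2}`; and `r₁` with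
`μ = -λ⁻¹` rebuilds it from them.  Compatibility of `s₁` and `r₁` with the structure maps is a
coordinatewise check, and `δ`-compatibility of `r₁` is what forces the band parameter to be `μ`. -/

theorem sndRow_ne_lastRow [NeZero e] : sndRow e ≠ lastRow e := by
  have := NeZero.pos e
  simp only [sndRow, lastRow, ne_eq, Fin.mk.injEq]
  omega

theorem vrt_sndRow [NeZero e] : vrt e (sndRow e) = ve e := dif_neg (lt_irrefl _)

theorem vrt_lastRow [NeZero e] : vrt e (lastRow e) = ve e := dif_neg (by simp [lastRow])

theorem mk1_apply {m : ℕ} {W : Type} [AddCommGroup W] [Module R W] (src dst : Fin m)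
    (g : W →ₗ[R] W) (x : Fin m → W) (r : Fin m) :
    mk1 src dst g x r = if r = dst then g (x src) else 0 := rfl

theorem prj_apply {m : ℕ} {W : Type} [AddCommGroup W] [Module R W] (S : Fin m → Prop)
    [DecidablePred S] (x : Fin m → W) (r : Fin m) :
    prj (R := R) S x r = if S r then x r else 0 := rfl

theorem s1_apply (lam : R) (y : Fin (e + 1) → Fin 2 → R) (r : Fin (e + 1)) :
    s1 R e lam y r =
      if r = lastRow e then y (sndRow e) 1 + lam * y (lastRow e) 0 else y r 0 := rfl

theorem r1_apply (mu : R) (x : Fin (e + 1) → R) (r : Fin (e + 1)) (c : Fin 2) :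
    r1 R e mu x r c =
      if c = 1 then x r else if r = lastRow e then mu * x (sndRow e) else 0 := rfl

theorem s1_surjective [NeZero e] (lam : R) : Function.Surjective (s1 R e lam) := by
  intro x
  refine ⟨fun r => ![if r = lastRow e then 0 else x r, if r = sndRow e then x (lastRow e) else 0],
    funext fun r => ?_⟩
  by_cases hr : r = lastRow e <;> simp [s1_apply, hr, sndRow_ne_lastRow]

theorem s1_comp_v [NeZero e] (lam : R) (i : Fin e) :
    s1 R e lam ∘ₗ (Pe R e).v i = (band1 R e lam).v i ∘ₗ s1 R e lam := by
  refine LinearMap.ext fun y => funext fun r => ?_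
  by_cases hr : r = lastRow e
  · subst hr
    simp only [LinearMap.comp_apply, s1_apply, prj_apply, vrt_sndRow, vrt_lastRow]
    split_ifs <;> simp
  · simp only [LinearMap.comp_apply, s1_apply, prj_apply, hr, if_false]
    split_ifs <;> rfl

theorem r1_comp_v [NeZero e] (mu : R) (i : Fin e) :
    r1 R e mu ∘ₗ (band1 R e mu).v i = (Pe R e).v i ∘ₗ r1 R e mu := by
  refine LinearMap.ext fun x => funext fun r => funext fun c => ?_
  by_cases hr : r = lastRow e
  · subst hr
    simp only [LinearMap.comp_apply, r1_apply, prj_apply, ite_apply, vrt_sndRow, vrt_lastRow]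
    split_ifs <;> simp
  · simp only [LinearMap.comp_apply, r1_apply, prj_apply, ite_apply, hr, if_false]
    split_ifs <;> simp

/- After unfolding, both sides are nests of `if`s on row indices; every branch is either an
identity in `R` or has index conditions contradicting `2 ≤ e`. -/
theorem s1_mem_homSet [NeZero e] (he : 2 ≤ e) (lam : R) :
    s1 R e lam ∈ homSet (Pe R e) (band1 R e lam) := by
  refine ⟨s1_comp_v lam, fun j => ?_, ?_⟩ <;> refine LinearMap.ext fun y => funext fun r => ?_ <;>
    simp only [Pe, band1] <;> (try split_ifs) <;>
    simp only [LinearMap.comp_apply, LinearMap.add_apply, Pi.add_apply, mk1_apply, s1_apply,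
      LinearMap.id_apply, LinearMap.smul_apply, Matrix.mulVecLin_apply, Matrix.mulVec_fin_two,
      Matrix.of_apply, Matrix.cons_val_zero, Matrix.cons_val_one] <;>
    split_ifs <;> subst_vars <;>
    first | (simp; done) | ring1 | (exfalso; simp [Fin.ext_iff, sndRow, lastRow] at *; omega)

theorem r1_mem_homSet [NeZero e] (he : 2 ≤ e) (mu : R) :
    r1 R e mu ∈ homSet (band1 R e mu) (Pe R e) := by
  refine ⟨r1_comp_v mu, fun j => ?_, ?_⟩ <;>
    refine LinearMap.ext fun x => funext fun r => funext fun c => ?_ <;>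
    simp only [Pe, band1] <;> (try split_ifs) <;>
    simp only [LinearMap.comp_apply, LinearMap.add_apply, Pi.add_apply, mk1_apply, r1_apply,
      ite_apply, Pi.zero_apply, LinearMap.id_apply, LinearMap.smul_apply, Matrix.mulVecLin_apply,
      Matrix.mulVec_fin_two, Matrix.of_apply, Matrix.cons_val_zero, Matrix.cons_val_one] <;>
    fin_cases c <;> split_ifs <;> subst_vars <;>
    first | (simp; done) | ring1 | (exfalso; simp [Fin.ext_iff, sndRow, lastRow] at * <;> omega)

theorem r1_injective (mu : R) : Function.Injective (r1 R e mu) := fun x y hxy =>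
  funext fun r => by simpa [r1_apply] using congrFun (congrFun hxy r) 1

theorem range_r1_eq_ker_s1 [NeZero e] {lam mu : R} (h : lam * mu = -1) :
    LinearMap.range (r1 R e mu) = LinearMap.ker (s1 R e lam) := by
  apply le_antisymm
  · rintro _ ⟨x, rfl⟩
    refine funext fun r => ?_
    by_cases hr : r = lastRow e
    · simp only [hr, s1_apply, r1_apply, if_true, zero_ne_one, if_false, Pi.zero_apply]
      linear_combination x (sndRow e) * h
    · simp [s1_apply, hr, r1_apply]
  · intro y hy
    have hfirst : ∀ r ≠ lastRow e, y r 0 = 0 := fun r hr => by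
      simpa [s1_apply, hr] using congrFun hy r
    have hlast : y (sndRow e) 1 + lam * y (lastRow e) 0 = 0 := by
      simpa [s1_apply] using congrFun hy (lastRow e)
    refine ⟨fun r => y r 1, funext fun r => funext fun c => ?_⟩
    fin_cases c
    · by_cases hr : r = lastRow e
      · subst hr
        simp only [Fin.zero_eta, r1_apply, zero_ne_one, if_true, if_false]
        linear_combination mu * hlast - y (lastRow e) 0 * h
      · simp [r1_apply, hr, hfirst r hr]
    · simp [r1_apply]

/-- The `Λ_e`-homomorphism `s₁ : P_e → B(1,λ)` is surjective
and its kernel is isomorphic, as a representation of `Q_e`, to `B(1, -λ⁻¹)`: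
explicitly, the map sending the standard basis of `B(1, -λ⁻¹)` to the vectors
`d_i = b_{i,2}`, `d_e = b_{e,2} - λ⁻¹ b_{e,3}`, `d_{e+1} = b_{e,4}` (this is
`r1 k e (-λ⁻¹)`) is an injective `Λ_e`-homomorphism with range `ker s₁`. -/
theorem kernel_s1_is_band (k : Type) [Field k] (e : ℕ) (he : 2 ≤ e) [NeZero e]
    (lam : k) (hlam : lam ≠ 0) :
    Function.Surjective (s1 k e lam) ∧
    s1 k e lam ∈ homSet (Pe k e) (band1 k e lam) ∧
    r1 k e (-lam⁻¹) ∈ homSet (band1 k e (-lam⁻¹)) (Pe k e) ∧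
    Function.Injective (r1 k e (-lam⁻¹)) ∧
    LinearMap.range (r1 k e (-lam⁻¹)) = LinearMap.ker (s1 k e lam) := by
  have hmu : lam * -lam⁻¹ = -1 := by rw [mul_neg, mul_inv_cancel₀ hlam]
  exact ⟨s1_surjective lam, s1_mem_homSet he lam, r1_mem_homSet he _, r1_injective _,
    range_r1_eq_ker_s1 hmu⟩

end GBTA
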